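/- arXiv:1902.06633 — 5 statements merged into one kernel-verified Lean document; each statement's English description precedes it below -/
import Mathlib

section
/- Let G=(V,E) be a finite simple graph with boundary set ∂V ⊆ V such that every diagonal entry of D is strictly positive and such that vol(S) > 0 for every nonempty S ⊆ V. Then the first nontrivial eigenvalue λ_R of the normalized reflected Neumann graph Laplacian 𝓛_R and the Cheeger constant h_R satisfy √(2·λ_R) ≥ h_R ≥ λ_R/2. -/
/-!
The substitution `x = D^{1/2} Q^{1/2} u` turns `λ_R` into the least Rayleigh quotient
`E(u) / ‖u‖²` over `u ⊥ deg` of the weighted graph with the symmetric weights `c = Q R`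
(`1/2` on boundary–boundary edges, `1` on all others), and `m(S, Sᶜ)`, `vol` into its cut and
volume; so both bounds are the Cheeger inequalities of this weighted graph.

The lower bound tests the quotient on `1_S / vol S - 1_{Sᶜ} / vol Sᶜ`. For the upper bound,
shift `u` by a weighted median and keep whichever of its positive and negative parts, `g`, has
the smaller quotient; the support of `g` has at most half the volume. A sweep over the
superlevel sets of `g²` (discrete co-area formula), combined with Cauchy–Schwarz on
`|g v ^ 2 - g w ^ 2| = |g v - g w| |g v + g w|`, yields a superlevel set `S` with
`cut S ≤ √(2 E(g) / ‖g‖²) vol S`.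
-/

open Matrix Finset

namespace RN

variable {V : Type*}

/-- The adjacency matrix of `G` with real entries. -/
noncomputable def adjMat [Fintype V] [DecidableEq V] (G : SimpleGraph V) [DecidableRel G.Adj] :
    Matrix V V ℝ :=
  Matrix.of fun u v => if G.Adj u v then 1 else 0

/-- The reflected adjacency matrix `R = [[A₁₁, A₁₂],[2A₁₂ᵀ, A₂₂]]`, where the first block is
indexed by the interior vertices and the second block by the boundary vertices `B`. -/
noncomputable def reflAdj [Fintype V] [DecidableEq V] (G : SimpleGraph V) [DecidableRel G.Adj]
    (B : Finset V) : Matrix V V ℝ :=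
  Matrix.of fun u v => (if u ∈ B ∧ v ∉ B then 2 else 1) * adjMat G u v

/-- The diagonal entries of `D = diag(R·1)`. -/
noncomputable def deg [Fintype V] [DecidableEq V] (G : SimpleGraph V) [DecidableRel G.Adj]
    (B : Finset V) (v : V) : ℝ :=
  ∑ w, reflAdj G B v w

/-- `D = diag(R·1)`. -/
noncomputable def Dmat [Fintype V] [DecidableEq V] (G : SimpleGraph V) [DecidableRel G.Adj]
    (B : Finset V) : Matrix V V ℝ :=
  Matrix.diagonal (deg G B)

/-- The reflected Neumann Laplacian `L_R = D - R`. -/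
noncomputable def LR [Fintype V] [DecidableEq V] (G : SimpleGraph V) [DecidableRel G.Adj]
    (B : Finset V) : Matrix V V ℝ :=
  Dmat G B - reflAdj G B

/-- The weight `q_v`, which is `1` on interior vertices and `1/2` on boundary vertices. -/
noncomputable def qw [DecidableEq V] (B : Finset V) (v : V) : ℝ := if v ∈ B then 1/2 else 1

/-- The diagonal matrix `Q` with entries `1` on the interior and `1/2` on the boundary. -/
noncomputable def Qmat [Fintype V] [DecidableEq V] (B : Finset V) : Matrix V V ℝ :=
  Matrix.diagonal (qw B)

/-- `D^{1/2}`. -/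
noncomputable def Dhalf [Fintype V] [DecidableEq V] (G : SimpleGraph V) [DecidableRel G.Adj]
    (B : Finset V) : Matrix V V ℝ :=
  Matrix.diagonal fun v => Real.sqrt (deg G B v)

/-- `D^{-1/2}`. -/
noncomputable def Dinvhalf [Fintype V] [DecidableEq V] (G : SimpleGraph V) [DecidableRel G.Adj]
    (B : Finset V) : Matrix V V ℝ :=
  Matrix.diagonal fun v => (Real.sqrt (deg G B v))⁻¹

/-- The normalized reflected Neumann Laplacian `𝓛_R = D^{-1/2} L_R D^{-1/2}`. -/
noncomputable def NLR [Fintype V] [DecidableEq V] (G : SimpleGraph V) [DecidableRel G.Adj]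
    (B : Finset V) : Matrix V V ℝ :=
  Dinvhalf G B * LR G B * Dinvhalf G B

/-- `Q^{1/2}`. -/
noncomputable def Qhalf [Fintype V] [DecidableEq V] (B : Finset V) : Matrix V V ℝ :=
  Matrix.diagonal fun v => Real.sqrt (qw B v)

/-- `Q^{-1/2}`. -/
noncomputable def Qinvhalf [Fintype V] [DecidableEq V] (B : Finset V) : Matrix V V ℝ :=
  Matrix.diagonal fun v => (Real.sqrt (qw B v))⁻¹

/-- The first nontrivial eigenvalue `λ_R` of `𝓛_R`: the infimum of the Rayleigh quotients
`xᵀ (Q^{1/2} 𝓛_R Q^{-1/2}) x / xᵀx` over nonzero `x` with `xᵀ D^{1/2} Q^{1/2} 1 = 0`. -/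
noncomputable def lambdaR [Fintype V] [DecidableEq V] (G : SimpleGraph V) [DecidableRel G.Adj]
    (B : Finset V) : ℝ :=
  sInf {r : ℝ | ∃ x : V → ℝ, x ≠ 0 ∧
    x ⬝ᵥ ((Dhalf G B * Qhalf B) *ᵥ fun _ => 1) = 0 ∧
    r = x ⬝ᵥ ((Qhalf B * NLR G B * Qinvhalf B) *ᵥ x) / (x ⬝ᵥ x)}

/-- `|E(U,W)|`: the number of edges of `G` with one endpoint in `U` and one in `W`. -/
def ecount [Fintype V] [DecidableEq V] (G : SimpleGraph V) [DecidableRel G.Adj]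
    (U W : Finset V) : ℕ :=
  (G.edgeFinset.filter fun e => ∃ u ∈ U, ∃ w ∈ W, e = s(u, w)).card

/-- The measure `m(U,W) = |E(U,W)| - (1/2)|E(U ∩ ∂V, W ∩ ∂V)|`, where `B = ∂V`. -/
noncomputable def mMeas [Fintype V] [DecidableEq V] (G : SimpleGraph V) [DecidableRel G.Adj]
    (B : Finset V) (U W : Finset V) : ℝ :=
  (ecount G U W : ℝ) - (1/2) * (ecount G (U ∩ B) (W ∩ B) : ℝ)

/-- The volume `vol(U) = Σ_{u ∈ U} m({u}, V)`. -/
noncomputable def vol [Fintype V] [DecidableEq V] (G : SimpleGraph V) [DecidableRel G.Adj]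
    (B : Finset V) (U : Finset V) : ℝ :=
  ∑ u ∈ U, mMeas G B {u} Finset.univ

/-- The Cheeger constant `h_R`: the infimum over nonempty proper subsets `S ⊆ V` of
`m(S, V∖S) / min(vol S, vol (V∖S))`. -/
noncomputable def cheegerR [Fintype V] [DecidableEq V] (G : SimpleGraph V) [DecidableRel G.Adj]
    (B : Finset V) : ℝ :=
  sInf {r : ℝ | ∃ S : Finset V, S.Nonempty ∧ S ≠ Finset.univ ∧
    r = mMeas G B S Sᶜ / min (vol G B S) (vol G B Sᶜ)}

end RN

namespace WeightedGraph

variable {V : Type*} [Fintype V]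

noncomputable section Definitions

variable (c : V → V → ℝ)

def deg (v : V) : ℝ := ∑ w, c v w

def vol (S : Finset V) : ℝ := ∑ v ∈ S, deg c v

def cut [DecidableEq V] (S : Finset V) : ℝ := ∑ v ∈ S, ∑ w ∈ Sᶜ, c v w

def energy (u : V → ℝ) : ℝ := (1 / 2) * ∑ v, ∑ w, c v w * (u v - u w) ^ 2

def normSq (u : V → ℝ) : ℝ := ∑ v, deg c v * u v ^ 2

def rayleighSet : Set ℝ :=
  {r | ∃ u : V → ℝ, u ≠ 0 ∧ ∑ v, deg c v * u v = 0 ∧ r = energy c u / normSq c u}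

def cheegerSet [DecidableEq V] : Set ℝ :=
  {r | ∃ S : Finset V, S.Nonempty ∧ S ≠ univ ∧ r = cut c S / min (vol c S) (vol c Sᶜ)}

structure IsEdgeWeight : Prop where
  symm : ∀ v w, c v w = c w v
  nonneg : ∀ v w, 0 ≤ c v w
  deg_pos : ∀ v, 0 < deg c v

end Definitions

variable {c : V → V → ℝ}

lemma vol_nonneg (hc : IsEdgeWeight c) (S : Finset V) : 0 ≤ vol c S :=
  sum_nonneg fun v _ => (hc.deg_pos v).le

lemma vol_pos (hc : IsEdgeWeight c) {S : Finset V} (hS : S.Nonempty) : 0 < vol c S :=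
  sum_pos (fun v _ => hc.deg_pos v) hS

lemma vol_mono (hc : IsEdgeWeight c) {S T : Finset V} (h : S ⊆ T) : vol c S ≤ vol c T :=
  sum_le_sum_of_subset_of_nonneg h fun v _ _ => (hc.deg_pos v).le

lemma vol_add_vol_compl [DecidableEq V] (S : Finset V) : vol c S + vol c Sᶜ = vol c univ :=
  sum_add_sum_compl S (deg c)

lemma cut_nonneg [DecidableEq V] (hc : IsEdgeWeight c) (S : Finset V) : 0 ≤ cut c S :=
  sum_nonneg fun v _ => sum_nonneg fun w _ => hc.nonneg v w

lemma cut_eq_sum_ite [DecidableEq V] (S : Finset V) :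
    cut c S = ∑ v, ∑ w, if v ∈ S ∧ w ∉ S then c v w else 0 := by
  simp only [cut, ite_and, ← mem_compl, sum_ite_irrel, sum_const_zero, Fintype.sum_ite_mem]

lemma vol_eq_sum_ite [DecidableEq V] (S : Finset V) :
    vol c S = ∑ v, if v ∈ S then deg c v else 0 :=
  (Fintype.sum_ite_mem S _).symm

lemma energy_nonneg (hc : IsEdgeWeight c) (u : V → ℝ) : 0 ≤ energy c u :=
  mul_nonneg (by norm_num) <| sum_nonneg fun v _ => sum_nonneg fun w _ =>
    mul_nonneg (hc.nonneg v w) (sq_nonneg _)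

lemma normSq_nonneg (hc : IsEdgeWeight c) (u : V → ℝ) : 0 ≤ normSq c u :=
  sum_nonneg fun v _ => mul_nonneg (hc.deg_pos v).le (sq_nonneg _)

lemma normSq_pos (hc : IsEdgeWeight c) {u : V → ℝ} (hu : u ≠ 0) : 0 < normSq c u := by
  obtain ⟨v, hv⟩ := Function.ne_iff.1 hu
  exact sum_pos' (fun w _ => mul_nonneg (hc.deg_pos w).le (sq_nonneg _))
    ⟨v, mem_univ v, mul_pos (hc.deg_pos v) (pow_two_pos_of_ne_zero hv)⟩

lemma sum_sum_mul_sq_left (u : V → ℝ) : ∑ v, ∑ w, c v w * u v ^ 2 = normSq c u := by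
  simp only [normSq, deg, sum_mul]

lemma sum_sum_mul_sq_right (hsymm : ∀ v w, c v w = c w v) (u : V → ℝ) :
    ∑ v, ∑ w, c v w * u w ^ 2 = normSq c u := by
  rw [sum_comm, ← sum_sum_mul_sq_left]
  simp only [hsymm]

lemma energy_eq_normSq_sub (hsymm : ∀ v w, c v w = c w v) (u : V → ℝ) :
    energy c u = normSq c u - ∑ v, ∑ w, c v w * u v * u w := by
  have expand : ∀ v w, c v w * (u v - u w) ^ 2
      = c v w * u v ^ 2 + c v w * u w ^ 2 - 2 * (c v w * u v * u w) := fun v w => by ring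
  simp only [energy, expand, sum_add_distrib, sum_sub_distrib, ← mul_sum,
    sum_sum_mul_sq_left, sum_sum_mul_sq_right hsymm]
  ring

lemma energy_sub_const (u : V → ℝ) (m : ℝ) : energy c (fun v => u v - m) = energy c u := by
  simp only [energy, sub_sub_sub_cancel_right]

lemma normSq_sub_const (u : V → ℝ) (m : ℝ) :
    normSq c (fun v => u v - m) = normSq c u - 2 * m * ∑ v, deg c v * u v + m ^ 2 * vol c univ := by
  simp only [normSq, vol, mul_sum, ← sum_sub_distrib, ← sum_add_distrib]
  exact sum_congr rfl fun v _ => by ring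

lemma energy_ite [DecidableEq V] (hsymm : ∀ v w, c v w = c w v) (S : Finset V) (x y : ℝ) :
    energy c (fun v => if v ∈ S then x else y) = (x - y) ^ 2 * cut c S := by
  have hterm : ∀ v w, c v w * ((if v ∈ S then x else y) - if w ∈ S then x else y) ^ 2
      = (x - y) ^ 2 *
          ((if v ∈ S ∧ w ∉ S then c v w else 0) + if w ∈ S ∧ v ∉ S then c w v else 0) := by
    intro v w
    by_cases hv : v ∈ S <;> by_cases hw : w ∈ S <;> simp [hv, hw, hsymm w v] <;> ring
  have hswap : ∑ v, ∑ w, (if w ∈ S ∧ v ∉ S then c w v else 0) = cut c S := by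
    rw [sum_comm, cut_eq_sum_ite]
  simp only [energy, hterm, ← mul_sum, sum_add_distrib, hswap, ← cut_eq_sum_ite]
  ring

lemma sum_deg_mul_ite [DecidableEq V] (S : Finset V) (x y : ℝ) :
    ∑ v, deg c v * (if v ∈ S then x else y) = vol c S * x + vol c Sᶜ * y := by
  rw [← sum_add_sum_compl S, vol, vol, sum_mul, sum_mul]
  congr 1 <;> refine sum_congr rfl fun v hv => ?_
  · rw [if_pos hv]
  · rw [if_neg (mem_compl.1 hv)]

lemma exists_median [Nonempty V] (hc : IsEdgeWeight c) (u : V → ℝ) :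
    ∃ m, 2 * vol c (univ.filter fun v => m < u v) ≤ vol c univ ∧
      2 * vol c (univ.filter fun v => u v < m) ≤ vol c univ := by
  have hsplit : ∀ m, vol c (univ.filter fun v => u v ≤ m) + vol c (univ.filter fun v => m < u v)
      = vol c univ := fun m => by
    simpa only [vol, not_le] using sum_filter_add_sum_filter_not univ (fun v => u v ≤ m) (deg c)
  set heavy := univ.filter fun v => vol c univ ≤ 2 * vol c (univ.filter fun w => u w ≤ u v)
  have hheavy : heavy.Nonempty := by
    obtain ⟨v, -, hv⟩ := exists_max_image univ u univ_nonempty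
    refine ⟨v, mem_filter.2 ⟨mem_univ v, ?_⟩⟩
    rw [filter_true_of_mem fun w _ => hv w (mem_univ w)]
    linarith [vol_nonneg hc univ]
  obtain ⟨v₀, hv₀, hmin⟩ := exists_min_image heavy u hheavy
  refine ⟨u v₀, by linarith [hsplit (u v₀), (mem_filter.1 hv₀).2], ?_⟩
  by_contra! hlow
  have hne : (univ.filter fun v => u v < u v₀).Nonempty := by
    by_contra! hempty
    rw [hempty, show vol c ∅ = 0 from sum_empty] at hlow
    linarith [vol_nonneg hc univ]
  obtain ⟨v₁, hv₁, hmax⟩ := exists_max_image _ u hne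
  have hsub : (univ.filter fun v => u v < u v₀) ⊆ univ.filter fun w => u w ≤ u v₁ :=
    fun w hw => mem_filter.2 ⟨mem_univ w, hmax w hw⟩
  have hv₁_heavy : v₁ ∈ heavy := mem_filter.2 ⟨mem_univ v₁, by linarith [vol_mono hc hsub]⟩
  linarith [hmin v₁ hv₁_heavy, (mem_filter.1 hv₁).2]

lemma sq_posPart_add_sq_negPart (a : ℝ) : a⁺ ^ 2 + a⁻ ^ 2 = a ^ 2 := by
  rcases le_total a 0 with h | h
  · simp [posPart_eq_zero.2 h, negPart_eq_neg.2 h]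
  · simp [negPart_eq_zero.2 h, posPart_eq_self.2 h]

lemma sq_sub_posPart_add_sq_sub_negPart_le (a b : ℝ) :
    (a⁺ - b⁺) ^ 2 + (a⁻ - b⁻) ^ 2 ≤ (a - b) ^ 2 := by
  rcases le_total a 0 with ha | ha <;> rcases le_total b 0 with hb | hb <;>
    simp only [posPart_eq_zero.2, negPart_eq_neg.2, negPart_eq_zero.2, posPart_eq_self.2, ha,
      hb] <;>
    nlinarith

lemma normSq_posPart_add_normSq_negPart (f : V → ℝ) :
    normSq c f⁺ + normSq c f⁻ = normSq c f := by
  simp only [normSq, ← sum_add_distrib, ← mul_add, Pi.posPart_apply, Pi.negPart_apply,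
    sq_posPart_add_sq_negPart]

lemma energy_posPart_add_energy_negPart_le (hc : IsEdgeWeight c) (f : V → ℝ) :
    energy c f⁺ + energy c f⁻ ≤ energy c f := by
  simp only [energy, ← mul_add, ← sum_add_distrib, Pi.posPart_apply, Pi.negPart_apply]
  gcongr with v _ w _
  · exact hc.nonneg v w
  · exact sq_sub_posPart_add_sq_sub_negPart_le _ _

lemma exists_posPart_or_negPart_energy_le (hc : IsEdgeWeight c) {f : V → ℝ} {ρ : ℝ}
    (hf : 0 < normSq c f) (hρ : energy c f ≤ ρ * normSq c f) :
    ∃ g, (g = f⁺ ∨ g = f⁻) ∧ 0 < normSq c g ∧ energy c g ≤ ρ * normSq c g := by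
  by_contra! h
  have hle : ∀ g, (g = f⁺ ∨ g = f⁻) → ρ * normSq c g ≤ energy c g := fun g hg => by
    rcases (normSq_nonneg hc g).eq_or_lt with h0 | hpos
    · rw [← h0, mul_zero]
      exact energy_nonneg hc g
    · exact (h g hg hpos).le
  have hsum : ρ * normSq c f = ρ * normSq c f⁺ + ρ * normSq c f⁻ := by
    rw [← normSq_posPart_add_normSq_negPart f, mul_add]
  have hpart := energy_posPart_add_energy_negPart_le hc f
  rcases (normSq_nonneg hc f⁺).eq_or_lt with h0 | hpos
  · have := h f⁻ (Or.inr rfl) (by linarith [normSq_posPart_add_normSq_negPart (c := c) f])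
    linarith [hle f⁺ (Or.inl rfl)]
  · have := h f⁺ (Or.inl rfl) hpos
    linarith [hle f⁻ (Or.inr rfl)]

lemma exists_equiv_fin_antitone (φ : V → ℝ) :
    ∃ e : Fin (Fintype.card V) ≃ V, Antitone (φ ∘ e) := by
  let e₀ := (Fintype.equivFin V).symm
  let f : Fin (Fintype.card V) → ℝ := fun i => -φ (e₀ i)
  refine ⟨(Tuple.sort f).trans e₀, fun i j hij => ?_⟩
  have := Tuple.monotone_sort f hij
  simp only [Function.comp_apply, Equiv.trans_apply, f] at this ⊢
  linarith

lemma exists_antitone_enumeration (φ : V → ℝ) (hφ : ∀ v, 0 ≤ φ v) :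
    ∃ (n : ℕ) (t : ℕ → ℝ) (idx : V → ℕ), Antitone t ∧ t n = 0 ∧ (∀ v, idx v < n) ∧
      (∀ v, t (idx v) = φ v) ∧ ∀ j < n, ∃ v, idx v = j := by
  obtain ⟨e, he⟩ := exists_equiv_fin_antitone φ
  refine ⟨Fintype.card V, fun j => if h : j < Fintype.card V then φ (e ⟨j, h⟩) else 0,
    fun v => e.symm v, fun i j hij => ?_, by simp, fun v => (e.symm v).isLt, fun v => ?_,
    fun j hj => ⟨e ⟨j, hj⟩, by simp⟩⟩
  · dsimp only
    split_ifs with hj hi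
    · exact he (Fin.mk_le_mk.2 hij)
    · omega
    · exact hφ _
    · exact le_rfl
  · dsimp only
    rw [dif_pos (e.symm v).isLt]
    simp

lemma sum_range_ite_Ico_sub_succ {t : ℕ → ℝ} (ht : Antitone t) {a b n : ℕ} (hb : b ≤ n) :
    ∑ j ∈ range n, (if j ∈ Ico a b then t j - t (j + 1) else 0) = max (t a - t b) 0 := by
  rw [sum_ite_mem, inter_eq_right.2 fun j hj => mem_range.2 ((mem_Ico.1 hj).2.trans_le hb)]
  rcases le_total a b with hab | hba
  · rw [max_eq_left (sub_nonneg.2 (ht hab)), ← neg_sub (t b), ← sum_Ico_sub t hab,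
      ← sum_neg_distrib]
    simp only [neg_sub]
  · rw [Ico_eq_empty_of_le hba, sum_empty, max_eq_right (sub_nonpos.2 (ht hba))]

lemma sum_sub_succ_mul_vol_prefix [DecidableEq V] (c : V → V → ℝ) {t : ℕ → ℝ} (ht : Antitone t)
    {idx : V → ℕ} {n : ℕ} (hidx : ∀ v, idx v < n) :
    ∑ j ∈ range n, (t j - t (j + 1)) * vol c (univ.filter fun v => idx v ≤ j)
      = ∑ v, deg c v * (t (idx v) - t n) := calc
  _ = ∑ v, deg c v * ∑ j ∈ range n, if j ∈ Ico (idx v) n then t j - t (j + 1) else 0 := by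
    simp only [vol_eq_sum_ite, mul_sum]
    rw [sum_comm]
    refine sum_congr rfl fun v _ => sum_congr rfl fun j hj => ?_
    by_cases hvj : idx v ≤ j <;> simp [hvj, mem_range.1 hj, mul_comm]
  _ = ∑ v, deg c v * (t (idx v) - t n) := by
    simp only [sum_range_ite_Ico_sub_succ ht le_rfl, max_eq_left (sub_nonneg.2 (ht (hidx _).le))]

lemma sum_sub_succ_mul_cut_prefix [DecidableEq V] (c : V → V → ℝ) {t : ℕ → ℝ} (ht : Antitone t)
    {idx : V → ℕ} {n : ℕ} (hidx : ∀ v, idx v < n) :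
    ∑ j ∈ range n, (t j - t (j + 1)) * cut c (univ.filter fun v => idx v ≤ j)
      = ∑ v, ∑ w, c v w * max (t (idx v) - t (idx w)) 0 := calc
  _ = ∑ v, ∑ w, c v w *
        ∑ j ∈ range n, if j ∈ Ico (idx v) (idx w) then t j - t (j + 1) else 0 := by
    simp only [cut_eq_sum_ite, mul_sum]
    rw [sum_comm]
    refine sum_congr rfl fun v _ => ?_
    rw [sum_comm]
    refine sum_congr rfl fun w _ => sum_congr rfl fun j _ => ?_
    by_cases hvj : idx v ≤ j <;> by_cases hwj : j < idx w <;>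
      simp [hvj, hwj, not_le.2, le_of_not_gt, mul_comm]
  _ = ∑ v, ∑ w, c v w * max (t (idx v) - t (idx w)) 0 := by
    have htelescope : ∀ a w, ∑ j ∈ range n, (if j ∈ Ico a (idx w) then t j - t (j + 1) else 0)
        = max (t a - t (idx w)) 0 := fun a w => sum_range_ite_Ico_sub_succ ht (hidx w).le
    simp only [htelescope]

lemma exists_pos_weight_le_of_sum_mul_le {ι : Type*} {s : Finset ι} {w x y : ι → ℝ}
    (hw : ∀ j ∈ s, 0 ≤ w j) (hpos : ∃ j ∈ s, 0 < w j)
    (h : ∑ j ∈ s, w j * x j ≤ ∑ j ∈ s, w j * y j) : ∃ j ∈ s, 0 < w j ∧ x j ≤ y j := by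
  by_contra! hlt
  obtain ⟨j, hj, hwj⟩ := hpos
  have hterm : ∀ i ∈ s, w i * y i ≤ w i * x i := fun i hi => by
    rcases (hw i hi).eq_or_lt with h0 | h0
    · rw [← h0, zero_mul, zero_mul]
    · exact (mul_lt_mul_of_pos_left (hlt i hi h0) h0).le
  linarith [sum_lt_sum hterm ⟨j, hj, mul_lt_mul_of_pos_left (hlt j hj hwj) hwj⟩]

/-- Discrete co-area inequality: weighted by the gaps between consecutive values, the volumes of
the prefixes of a decreasing enumeration of `φ` add up to `∑ deg φ` and their cuts to the total
variation, so some prefix has cut-to-volume ratio at most the ratio of these sums. -/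
theorem exists_superlevel_cut_mul_le [DecidableEq V] (c : V → V → ℝ) {φ : V → ℝ}
    (hφ : ∀ v, 0 ≤ φ v) (hφ0 : φ ≠ 0) :
    ∃ S : Finset V, S.Nonempty ∧ (∀ v ∈ S, 0 < φ v) ∧
      cut c S * ∑ v, deg c v * φ v ≤ (∑ v, ∑ w, c v w * max (φ v - φ w) 0) * vol c S := by
  obtain ⟨n, t, idx, ht, ht_n, hidx, ht_idx, hsurj⟩ := exists_antitone_enumeration φ hφ
  set P : ℕ → Finset V := fun j => univ.filter fun v => idx v ≤ j
  set D := ∑ v, deg c v * φ v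
  set K := ∑ v, ∑ w, c v w * max (φ v - φ w) 0
  have hvol : ∑ j ∈ range n, (t j - t (j + 1)) * vol c (P j) = D := by
    simpa only [ht_idx, ht_n, sub_zero] using sum_sub_succ_mul_vol_prefix c ht hidx
  have hcut : ∑ j ∈ range n, (t j - t (j + 1)) * cut c (P j) = K := by
    simpa only [ht_idx] using sum_sub_succ_mul_cut_prefix c ht hidx
  have hgap : ∃ j ∈ range n, 0 < t j - t (j + 1) := by
    obtain ⟨v, hv⟩ := Function.ne_iff.1 hφ0
    have hsum : ∑ j ∈ range n, (0 : ℝ) < ∑ j ∈ range n, (t j - t (j + 1)) := by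
      rw [sum_const_zero, sum_range_sub', ht_n]
      linarith [ht (Nat.zero_le (idx v)), ht_idx v, (hφ v).lt_of_ne' hv]
    exact exists_lt_of_sum_lt hsum
  have hbalance : ∑ j ∈ range n, (t j - t (j + 1)) * (cut c (P j) * D)
      = ∑ j ∈ range n, (t j - t (j + 1)) * (K * vol c (P j)) := calc
    _ = (∑ j ∈ range n, (t j - t (j + 1)) * cut c (P j)) * D := by
      rw [sum_mul]
      exact sum_congr rfl fun j _ => by ring
    _ = K * ∑ j ∈ range n, (t j - t (j + 1)) * vol c (P j) := by rw [hcut, hvol]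
    _ = _ := by
      rw [mul_sum]
      exact sum_congr rfl fun j _ => by ring
  obtain ⟨j, hj, hδ, hle⟩ := exists_pos_weight_le_of_sum_mul_le
    (fun j _ => sub_nonneg.2 (ht j.le_succ)) hgap hbalance.le
  obtain ⟨v₀, hv₀⟩ := hsurj j (mem_range.1 hj)
  refine ⟨P j, ⟨v₀, by simp [P, hv₀]⟩, fun v hv => ?_, hle⟩
  have : t n ≤ t (j + 1) := ht (mem_range.1 hj)
  linarith [ht (mem_filter.1 hv).2, ht_idx v]

lemma sum_mul_max_sub_eq_half_mul_sum_abs (hsymm : ∀ v w, c v w = c w v) (x : V → ℝ) :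
    ∑ v, ∑ w, c v w * max (x v - x w) 0 = (1 / 2) * ∑ v, ∑ w, c v w * |x v - x w| := by
  have hswap : ∑ v, ∑ w, c v w * max (x w - x v) 0 = ∑ v, ∑ w, c v w * max (x v - x w) 0 := by
    rw [sum_comm]
    exact sum_congr rfl fun v _ => sum_congr rfl fun w _ => by rw [hsymm]
  have habs : ∀ v w, c v w * |x v - x w| = c v w * max (x v - x w) 0 + c v w * max (x w - x v) 0 :=
    fun v w => by rw [← mul_add, ← max_zero_add_max_neg_zero_eq_abs_self, neg_sub]
  simp only [habs, sum_add_distrib, hswap]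
  ring

lemma sq_sum_mul_max_sq_sub_sq_le (hc : IsEdgeWeight c) (g : V → ℝ) :
    (∑ v, ∑ w, c v w * max (g v ^ 2 - g w ^ 2) 0) ^ 2 ≤ 2 * energy c g * normSq c g := by
  have hCS : (∑ v, ∑ w, c v w * |g v ^ 2 - g w ^ 2|) ^ 2
      ≤ (∑ v, ∑ w, c v w * (g v - g w) ^ 2) * ∑ v, ∑ w, c v w * (g v + g w) ^ 2 := by
    simp only [← Fintype.sum_prod_type']
    refine sum_sq_le_sum_mul_sum_of_sq_le_mul _
      (fun p _ => mul_nonneg (hc.nonneg _ _) (sq_nonneg _))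
      (fun p _ => mul_nonneg (hc.nonneg _ _) (sq_nonneg _)) fun p _ => le_of_eq ?_
    rw [mul_pow, sq_abs]
    ring
  have hminus : ∑ v, ∑ w, c v w * (g v - g w) ^ 2 = 2 * energy c g := by
    rw [energy]
    ring
  have hplus : ∑ v, ∑ w, c v w * (g v + g w) ^ 2 ≤ 4 * normSq c g := calc
    _ ≤ ∑ v, ∑ w, (2 * (c v w * g v ^ 2) + 2 * (c v w * g w ^ 2)) := by
      gcongr with v _ w _
      nlinarith [hc.nonneg v w, mul_nonneg (hc.nonneg v w) (sq_nonneg (g v - g w))]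
    _ = 4 * normSq c g := by
      simp only [sum_add_distrib, ← mul_sum, sum_sum_mul_sq_left, sum_sum_mul_sq_right hc.symm]
      ring
  have hhalf := sum_mul_max_sub_eq_half_mul_sum_abs hc.symm fun v => g v ^ 2
  rw [hminus] at hCS
  have h8 := mul_le_mul_of_nonneg_left hplus (mul_nonneg zero_le_two (energy_nonneg hc g))
  rw [hhalf, mul_pow]
  linarith

lemma exists_cut_le_sqrt_mul_vol [DecidableEq V] (hc : IsEdgeWeight c) {g : V → ℝ} {ρ : ℝ}
    (hg : g ≠ 0) (hρ : energy c g ≤ ρ * normSq c g) :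
    ∃ S : Finset V, S.Nonempty ∧ (∀ v ∈ S, g v ≠ 0) ∧ cut c S ≤ √(2 * ρ) * vol c S := by
  have hD := normSq_pos hc hg
  have hφ0 : (fun v => g v ^ 2) ≠ 0 := by
    obtain ⟨v, hv⟩ := Function.ne_iff.1 hg
    exact Function.ne_iff.2 ⟨v, pow_ne_zero 2 hv⟩
  obtain ⟨S, hne, hpos, hS⟩ := exists_superlevel_cut_mul_le c (fun v => sq_nonneg (g v)) hφ0
  refine ⟨S, hne, fun v hv => pow_ne_zero_iff two_ne_zero |>.1 (hpos v hv).ne', ?_⟩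
  set K := ∑ v, ∑ w, c v w * max (g v ^ 2 - g w ^ 2) 0
  have hK : K ≤ √(2 * ρ) * normSq c g := calc
    K ≤ √(K ^ 2) := by rw [Real.sqrt_sq_eq_abs]; exact le_abs_self K
    _ ≤ √(2 * ρ * normSq c g ^ 2) := by
      gcongr
      nlinarith [sq_sum_mul_max_sq_sub_sq_le hc g]
    _ = √(2 * ρ) * normSq c g := by rw [Real.sqrt_mul' _ (sq_nonneg _), Real.sqrt_sq hD.le]
  refine le_of_mul_le_mul_right ?_ hD
  calc cut c S * normSq c g ≤ K * vol c S := hS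
    _ ≤ √(2 * ρ) * normSq c g * vol c S := by gcongr; exact vol_nonneg hc S
    _ = √(2 * ρ) * vol c S * normSq c g := by ring

theorem exists_cut_le_sqrt_mul_min_vol [DecidableEq V] (hc : IsEdgeWeight c) {u : V → ℝ}
    {ρ : ℝ} (hu : u ≠ 0) (horth : ∑ v, deg c v * u v = 0) (hρ : energy c u ≤ ρ * normSq c u) :
    ∃ S : Finset V, S.Nonempty ∧ S ≠ univ ∧ cut c S ≤ √(2 * ρ) * min (vol c S) (vol c Sᶜ) := by
  obtain ⟨v₀, -⟩ := Function.ne_iff.1 hu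
  have : Nonempty V := ⟨v₀⟩
  have hu_pos := normSq_pos hc hu
  have hρ0 : 0 ≤ ρ := nonneg_of_mul_nonneg_left ((energy_nonneg hc u).trans hρ) hu_pos
  obtain ⟨m, hm_above, hm_below⟩ := exists_median hc u
  set f : V → ℝ := fun v => u v - m
  have hf : normSq c u ≤ normSq c f := by
    rw [normSq_sub_const, horth]
    nlinarith [vol_nonneg hc univ, sq_nonneg m]
  have hf_energy : energy c f ≤ ρ * normSq c f := by
    rw [energy_sub_const]
    exact hρ.trans (mul_le_mul_of_nonneg_left hf hρ0)
  obtain ⟨g, hg_part, hg_pos, hg⟩ :=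
    exists_posPart_or_negPart_energy_le hc (hu_pos.trans_le hf) hf_energy
  have hg0 : g ≠ 0 := by
    rintro rfl
    simp [normSq] at hg_pos
  have hhalf : ∀ S : Finset V, (∀ v ∈ S, g v ≠ 0) → 2 * vol c S ≤ vol c univ := by
    intro S hS
    rcases hg_part with rfl | rfl
    · refine le_trans (mul_le_mul_of_nonneg_left (vol_mono hc fun v hv => ?_) zero_le_two) hm_above
      simpa [f] using mt posPart_eq_zero.2 (hS v hv)
    · refine le_trans (mul_le_mul_of_nonneg_left (vol_mono hc fun v hv => ?_) zero_le_two) hm_below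
      simpa [f] using mt negPart_eq_zero.2 (hS v hv)
  obtain ⟨S, hne, hsupp, hcut⟩ := exists_cut_le_sqrt_mul_vol hc hg0 hg
  have hS := hhalf S hsupp
  have hSc : vol c S ≤ vol c Sᶜ := by linarith [vol_add_vol_compl (c := c) S]
  refine ⟨S, hne, fun h => ?_, by rwa [min_eq_left hSc]⟩
  rw [h] at hS
  linarith [vol_pos hc (univ_nonempty (α := V))]

theorem exists_rayleigh_le_two_mul [DecidableEq V] (hc : IsEdgeWeight c) {S : Finset V}
    (hS : S.Nonempty) (hS' : S ≠ univ) :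
    ∃ u : V → ℝ, u ≠ 0 ∧ ∑ v, deg c v * u v = 0 ∧
      energy c u / normSq c u ≤ 2 * (cut c S / min (vol c S) (vol c Sᶜ)) := by
  have ha := vol_pos hc hS
  have hb := vol_pos hc (nonempty_iff_ne_empty.2 (by rwa [Ne, compl_eq_empty_iff]))
  set a := vol c S
  set b := vol c Sᶜ
  set u : V → ℝ := fun v => if v ∈ S then a⁻¹ else -b⁻¹
  have hnorm : normSq c u = a⁻¹ + b⁻¹ := by
    have hsq : ∀ v, u v ^ 2 = if v ∈ S then a⁻¹ ^ 2 else (-b⁻¹) ^ 2 := fun v => by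
      simp only [u]; split_ifs <;> rfl
    simp only [normSq, hsq, sum_deg_mul_ite]
    change a * a⁻¹ ^ 2 + b * (-b⁻¹) ^ 2 = _
    field_simp
  have hmin : a⁻¹ + b⁻¹ ≤ 2 / min a b := by
    have := inv_anti₀ (lt_min ha hb) (min_le_left a b)
    have := inv_anti₀ (lt_min ha hb) (min_le_right a b)
    rw [div_eq_mul_inv]
    linarith
  refine ⟨u, ?_, ?_, ?_⟩
  · obtain ⟨v, hv⟩ := hS
    exact Function.ne_iff.2 ⟨v, by simp [u, hv, ha.ne']⟩
  · rw [sum_deg_mul_ite]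
    field_simp
    ring
  · rw [energy_ite hc.symm, hnorm]
    calc (a⁻¹ - -b⁻¹) ^ 2 * cut c S / (a⁻¹ + b⁻¹) = (a⁻¹ + b⁻¹) * cut c S := by
          field_simp
          ring
      _ ≤ 2 / min a b * cut c S := mul_le_mul_of_nonneg_right hmin (cut_nonneg hc S)
      _ = 2 * (cut c S / min a b) := by ring

lemma sInf_bounds_of_forall_exists_le {Λ H : Set ℝ} (hΛ : ∀ r ∈ Λ, 0 ≤ r) (hH : ∀ h ∈ H, 0 ≤ h)
    (hHΛ : ∀ h ∈ H, ∃ r ∈ Λ, r ≤ 2 * h) (hΛH : ∀ r ∈ Λ, ∃ h ∈ H, h ≤ √(2 * r)) :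
    √(2 * sInf Λ) ≥ sInf H ∧ sInf H ≥ sInf Λ / 2 := by
  rcases H.eq_empty_or_nonempty with rfl | ⟨h₀, hh₀⟩
  · have : Λ = ∅ := Set.eq_empty_of_forall_notMem fun r hr => by
      obtain ⟨h, hh, -⟩ := hΛH r hr
      exact hh
    simp [this]
  obtain ⟨r₀, hr₀, -⟩ := hHΛ h₀ hh₀
  have hHinf : 0 ≤ sInf H := le_csInf ⟨h₀, hh₀⟩ hH
  refine ⟨?_, le_csInf ⟨h₀, hh₀⟩ fun h hh => ?_⟩
  · have : sInf H ^ 2 / 2 ≤ sInf Λ := le_csInf ⟨r₀, hr₀⟩ fun r hr => by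
      obtain ⟨h, hh, hle⟩ := hΛH r hr
      have hsq := pow_le_pow_left₀ hHinf ((csInf_le ⟨0, hH⟩ hh).trans hle) 2
      rw [Real.sq_sqrt (by linarith [hΛ r hr])] at hsq
      linarith
    rw [ge_iff_le, ← Real.sqrt_sq hHinf]
    exact Real.sqrt_le_sqrt (by linarith)
  · obtain ⟨r, hr, hle⟩ := hHΛ h hh
    linarith [csInf_le ⟨0, hΛ⟩ hr]

theorem cheeger_inequality [DecidableEq V] (hc : IsEdgeWeight c) :
    √(2 * sInf (rayleighSet c)) ≥ sInf (cheegerSet c) ∧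
      sInf (cheegerSet c) ≥ sInf (rayleighSet c) / 2 := by
  refine sInf_bounds_of_forall_exists_le ?_ ?_ ?_ ?_
  · rintro _ ⟨u, -, -, rfl⟩
    exact div_nonneg (energy_nonneg hc u) (normSq_nonneg hc u)
  · rintro _ ⟨S, -, -, rfl⟩
    exact div_nonneg (cut_nonneg hc S) (le_min (vol_nonneg hc S) (vol_nonneg hc _))
  · rintro _ ⟨S, hS, hS', rfl⟩
    obtain ⟨u, hu, horth, hle⟩ := exists_rayleigh_le_two_mul hc hS hS'
    exact ⟨_, ⟨u, hu, horth, rfl⟩, hle⟩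
  · rintro _ ⟨u, hu, horth, rfl⟩
    obtain ⟨S, hS, hS', hcut⟩ := exists_cut_le_sqrt_mul_min_vol hc hu horth
      (div_mul_cancel₀ (energy c u) (normSq_pos hc hu).ne').ge
    exact ⟨_, ⟨S, hS, hS', rfl⟩,
      div_le_of_le_mul₀ (le_min (vol_nonneg hc S) (vol_nonneg hc _)) (Real.sqrt_nonneg _) hcut⟩

end WeightedGraph

namespace RN

open WeightedGraph (IsEdgeWeight energy normSq cut rayleighSet cheegerSet)

lemma qw_pos {V : Type*} [DecidableEq V] (B : Finset V) (v : V) : 0 < qw B v := by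
  unfold qw
  split_ifs <;> norm_num

variable {V : Type*} [Fintype V] [DecidableEq V] (G : SimpleGraph V) [DecidableRel G.Adj]
  (B : Finset V)

noncomputable def reflWeight (v w : V) : ℝ := qw B v * reflAdj G B v w

lemma reflWeight_apply (v w : V) :
    reflWeight G B v w = (if v ∈ B ∧ w ∈ B then 1 / 2 else 1) * adjMat G v w := by
  unfold reflWeight qw reflAdj
  by_cases hv : v ∈ B <;> by_cases hw : w ∈ B <;> simp [hv, hw]

lemma deg_reflWeight (v : V) : WeightedGraph.deg (reflWeight G B) v = qw B v * deg G B v := by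
  simp only [WeightedGraph.deg, reflWeight, RN.deg, mul_sum]

lemma isEdgeWeight_reflWeight (hD : ∀ v, 0 < deg G B v) : IsEdgeWeight (reflWeight G B) where
  symm v w := by simp only [reflWeight_apply, adjMat, of_apply, G.adj_comm v w, and_comm]
  nonneg v w := by
    rw [reflWeight_apply, adjMat, of_apply]
    split_ifs <;> norm_num
  deg_pos v := by
    rw [deg_reflWeight]
    exact mul_pos (qw_pos B v) (hD v)

noncomputable def sqrtMass (v : V) : ℝ := √(qw B v) * √(deg G B v)

lemma sqrtMass_mul_self (hD : ∀ v, 0 < deg G B v) (v : V) :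
    sqrtMass G B v * sqrtMass G B v = WeightedGraph.deg (reflWeight G B) v := by
  rw [deg_reflWeight, sqrtMass, mul_mul_mul_comm, Real.mul_self_sqrt (qw_pos B v).le,
    Real.mul_self_sqrt (hD v).le]

lemma qw_mul_LR (v w : V) : qw B v * LR G B v w
    = (if v = w then WeightedGraph.deg (reflWeight G B) v else 0) - reflWeight G B v w := by
  rw [LR, Matrix.sub_apply, Dmat, diagonal_apply, mul_sub, deg_reflWeight, reflWeight]
  split_ifs <;> simp

lemma dotProduct_sqrtMass_mul_one (hD : ∀ v, 0 < deg G B v) (u : V → ℝ) :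
    (sqrtMass G B * u) ⬝ᵥ ((Dhalf G B * Qhalf B) *ᵥ fun _ => 1)
      = ∑ v, WeightedGraph.deg (reflWeight G B) v * u v := by
  refine sum_congr rfl fun v _ => ?_
  rw [Dhalf, Qhalf, diagonal_mul_diagonal, mulVec_diagonal, Pi.mul_apply, mul_one,
    ← sqrtMass_mul_self G B hD, sqrtMass, mul_comm (√(deg G B v))]
  ring

lemma dotProduct_sqrtMass_mul_self (hD : ∀ v, 0 < deg G B v) (u : V → ℝ) :
    (sqrtMass G B * u) ⬝ᵥ (sqrtMass G B * u) = normSq (reflWeight G B) u := by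
  refine sum_congr rfl fun v _ => ?_
  rw [Pi.mul_apply, ← sqrtMass_mul_self G B hD]
  ring

lemma dotProduct_sqrtMass_mul_mulVec (hD : ∀ v, 0 < deg G B v) (u : V → ℝ) :
    (sqrtMass G B * u) ⬝ᵥ ((Qhalf B * NLR G B * Qinvhalf B) *ᵥ (sqrtMass G B * u))
      = energy (reflWeight G B) u := by
  have hentry : ∀ v w, (sqrtMass G B * u) v *
      ((Qhalf B * NLR G B * Qinvhalf B) v w * (sqrtMass G B * u) w)
        = qw B v * LR G B v w * u v * u w := fun v w => by
    simp only [Qhalf, NLR, Dinvhalf, Qinvhalf, diagonal_mul, mul_diagonal, Pi.mul_apply, sqrtMass]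
    have := Real.sqrt_pos.2 (hD v)
    have := Real.sqrt_pos.2 (hD w)
    have := Real.sqrt_pos.2 (qw_pos B v)
    have := Real.sqrt_pos.2 (qw_pos B w)
    field_simp
    rw [Real.sq_sqrt (qw_pos B v).le]
    ring
  simp only [dotProduct, mulVec, mul_sum, hentry, qw_mul_LR, sub_mul, ite_mul, zero_mul,
    sum_sub_distrib, sum_ite_eq, mem_univ, if_true]
  rw [WeightedGraph.energy_eq_normSq_sub (isEdgeWeight_reflWeight G B hD).symm, normSq]
  simp only [sq, mul_assoc]

lemma lambdaR_eq_sInf_rayleighSet (hD : ∀ v, 0 < deg G B v) :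
    lambdaR G B = sInf (rayleighSet (reflWeight G B)) := by
  have hs : ∀ v, sqrtMass G B v ≠ 0 := fun v =>
    mul_ne_zero (Real.sqrt_pos.2 (qw_pos B v)).ne' (Real.sqrt_pos.2 (hD v)).ne'
  have hsurj : Function.Surjective (sqrtMass G B * ·) := fun x =>
    ⟨x / sqrtMass G B, funext fun v => mul_div_cancel₀ (x v) (hs v)⟩
  have hne : ∀ u : V → ℝ, sqrtMass G B * u ≠ 0 ↔ u ≠ 0 := fun u => by
    simp only [ne_eq, funext_iff, Pi.mul_apply, Pi.zero_apply, mul_eq_zero, hs, false_or]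
  unfold lambdaR rayleighSet
  congr 1
  ext r
  rw [Set.mem_ofPred_eq, hsurj.exists]
  simp only [hne, dotProduct_sqrtMass_mul_one G B hD,
    dotProduct_sqrtMass_mul_mulVec G B hD, dotProduct_sqrtMass_mul_self G B hD, Set.mem_ofPred_eq]

-- Without `h`, an edge with both ends in `U ∩ W` would be counted twice on the right.
lemma ecount_eq_sum {U W : Finset V} (h : ∀ a ∈ U ∩ W, ∀ b ∈ U ∩ W, ¬G.Adj a b) :
    (ecount G U W : ℝ) = ∑ v ∈ U, ∑ w ∈ W, adjMat G v w := by
  have hcard : ((U ×ˢ W).filter fun p => G.Adj p.1 p.2).card = ecount G U W := by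
    refine card_bij (fun p _ => s(p.1, p.2)) (fun p hp => ?_) (fun p hp q hq hpq => ?_)
      fun e he => ?_
    · obtain ⟨hmem, hadj⟩ := mem_filter.1 hp
      exact mem_filter.2 ⟨G.mem_edgeFinset.2 hadj, p.1, (mem_product.1 hmem).1, p.2,
        (mem_product.1 hmem).2, rfl⟩
    · obtain ⟨hp, hpadj⟩ := mem_filter.1 hp
      obtain ⟨hq, -⟩ := mem_filter.1 hq
      rw [mem_product] at hp hq
      rcases Sym2.eq_iff.1 hpq with ⟨h1, h2⟩ | ⟨h1, h2⟩
      · exact Prod.ext h1 h2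
      · exact absurd hpadj (h _ (mem_inter.2 ⟨hp.1, h1 ▸ hq.2⟩) _ (mem_inter.2 ⟨h2 ▸ hq.1, hp.2⟩))
    · obtain ⟨he, v, hv, w, hw, rfl⟩ := mem_filter.1 he
      exact ⟨(v, w), mem_filter.2 ⟨mem_product.2 ⟨hv, hw⟩, G.mem_edgeFinset.1 he⟩, rfl⟩
  rw [← hcard, card_filter, sum_product]
  push_cast
  rfl

lemma mMeas_eq_sum {U W : Finset V} (h : ∀ a ∈ U ∩ W, ∀ b ∈ U ∩ W, ¬G.Adj a b) :
    mMeas G B U W = ∑ v ∈ U, ∑ w ∈ W, reflWeight G B v w := by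
  have hB : ∀ a ∈ U ∩ B ∩ (W ∩ B), ∀ b ∈ U ∩ B ∩ (W ∩ B), ¬G.Adj a b := fun a ha b hb =>
    h a (by simp_all) b (by simp_all)
  rw [mMeas, ecount_eq_sum G h, ecount_eq_sum G hB]
  simp only [← sum_ite_mem, mul_sum, ← sum_sub_distrib, ite_and, reflWeight_apply]
  refine sum_congr rfl fun v _ => ?_
  split_ifs with hv
  · rw [mul_sum, ← sum_sub_distrib]
    exact sum_congr rfl fun w _ => by split_ifs <;> ring
  · simp

lemma vol_eq_vol_reflWeight (S : Finset V) : vol G B S = WeightedGraph.vol (reflWeight G B) S := by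
  refine sum_congr rfl fun u _ => ?_
  rw [mMeas_eq_sum G B, sum_singleton]
  · rfl
  · intro a ha b hb
    rw [mem_inter, mem_singleton] at ha hb
    rw [ha.1, hb.1]
    exact G.loopless.irrefl u

lemma mMeas_compl_eq_cut (S : Finset V) : mMeas G B S Sᶜ = cut (reflWeight G B) S :=
  mMeas_eq_sum G B fun a ha => absurd ha (by simp)

lemma cheegerR_eq_sInf_cheegerSet : cheegerR G B = sInf (cheegerSet (reflWeight G B)) := by
  simp only [cheegerR, cheegerSet, mMeas_compl_eq_cut, vol_eq_vol_reflWeight]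

end RN

open RN

theorem reflected_neumann_cheeger_inequality_general {V : Type*} [Fintype V] [DecidableEq V]
    (G : SimpleGraph V) [DecidableRel G.Adj] (B : Finset V)
    (hD : ∀ v, 0 < deg G B v) :
    Real.sqrt (2 * lambdaR G B) ≥ cheegerR G B ∧ cheegerR G B ≥ lambdaR G B / 2 := by
  rw [lambdaR_eq_sInf_rayleighSet G B hD, cheegerR_eq_sInf_cheegerSet G B]
  exact WeightedGraph.cheeger_inequality (isEdgeWeight_reflWeight G B hD)

/-- **Cheeger inequality for the reflected Neumann graph Laplacian.** For a finite simple
graph `G` with boundary `B ⊆ V` such that every diagonal entry of `D` is strictly positive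
and `vol(S) > 0` for every nonempty `S ⊆ V`, the first nontrivial eigenvalue `λ_R` of the
normalized reflected Neumann Laplacian `𝓛_R` and the Cheeger constant `h_R` satisfy
`√(2λ_R) ≥ h_R ≥ λ_R / 2`. -/
theorem reflected_neumann_cheeger_inequality {V : Type*} [Fintype V] [DecidableEq V]
    (G : SimpleGraph V) [DecidableRel G.Adj] (B : Finset V)
    (hD : ∀ v, 0 < deg G B v)
    (hvol : ∀ S : Finset V, S.Nonempty → 0 < vol G B S) :
    Real.sqrt (2 * lambdaR G B) ≥ cheegerR G B ∧ cheegerR G B ≥ lambdaR G B / 2 :=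
  reflected_neumann_cheeger_inequality_general G B hD
end

section
/- Let G=(V,E) be a finite simple graph with boundary set ∂V ⊆ V. Then Q·L_R = L − (1/2)·L_∂, where L is the standard (combinatorial) graph Laplacian of G, and L_∂ is the matrix that agrees with the graph Laplacian of the induced subgraph G[∂V] on the boundary block and is zero elsewhere. -/
/-! Compare `L_R` with `L` row by row. On an interior row nothing is reflected, so the rows agree.
On a boundary row the edges to the interior are doubled, in `R` and in `D`, which makes the row
of `L_R` equal to `2 L − L_∂`; the weight `1/2` of `Q` then gives `L − L_∂ / 2`. -/

open Matrix Finset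

open RN

namespace RN

variable {V : Type*} [Fintype V] [DecidableEq V] (G : SimpleGraph V) [DecidableRel G.Adj]
  (B : Finset V)

noncomputable def lap : Matrix V V ℝ :=
  Matrix.diagonal (fun v => ∑ w, adjMat G v w) - adjMat G

noncomputable def boundaryLap : Matrix V V ℝ :=
  Matrix.of fun u v =>
    if u ∈ B ∧ v ∈ B then (if u = v then ∑ w ∈ B, adjMat G u w else 0) - adjMat G u v else 0

variable {G B} {u : V}

lemma reflAdj_apply_of_notMem (hu : u ∉ B) (v : V) : reflAdj G B u v = adjMat G u v := by
  simp [reflAdj, hu]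

lemma reflAdj_apply_of_mem (hu : u ∈ B) (v : V) :
    reflAdj G B u v = 2 * adjMat G u v - if v ∈ B then adjMat G u v else 0 := by
  by_cases hv : v ∈ B <;> simp [reflAdj, hu, hv]; ring

lemma deg_of_notMem (hu : u ∉ B) : deg G B u = ∑ w, adjMat G u w := by
  simp only [deg, reflAdj_apply_of_notMem hu]

lemma deg_of_mem (hu : u ∈ B) :
    deg G B u = 2 * ∑ w, adjMat G u w - ∑ w ∈ B, adjMat G u w := by
  simp only [deg, reflAdj_apply_of_mem hu, sum_sub_distrib, ← mul_sum, sum_ite_mem, univ_inter]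

lemma LR_apply_of_notMem (hu : u ∉ B) (v : V) : LR G B u v = lap G u v := by
  simp [LR, Dmat, lap, diagonal_apply, deg_of_notMem hu, reflAdj_apply_of_notMem hu]

lemma LR_apply_of_mem (hu : u ∈ B) (v : V) :
    LR G B u v = 2 * lap G u v - boundaryLap G B u v := by
  rw [LR, Dmat, Matrix.sub_apply, diagonal_apply, deg_of_mem hu, reflAdj_apply_of_mem hu]
  by_cases hv : v ∈ B
  · by_cases huv : u = v
    · simp [lap, boundaryLap, huv, hv]
      ring
    · simp [lap, boundaryLap, huv, hu, hv]
      ring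
  · have huv : u ≠ v := by rintro rfl; exact hv hu
    simp [lap, boundaryLap, huv, hv]

end RN

/-- `Q·L_R = L − (1/2)·L_∂`, where `L = diag(A·1) − A` is the standard graph Laplacian of `G`
and `L_∂` agrees with the graph Laplacian of the induced subgraph `G[∂V]` on the boundary
block and is zero elsewhere. -/
theorem Qmat_mul_LR_eq_lap_sub_half_boundary_lap {V : Type*} [Fintype V] [DecidableEq V]
    (G : SimpleGraph V) [DecidableRel G.Adj] (B : Finset V) :
    Qmat B * LR G B =
      (Matrix.diagonal (fun v => ∑ w, adjMat G v w) - adjMat G)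
        - (1/2 : ℝ) • (Matrix.of fun u v =>
            if u ∈ B ∧ v ∈ B then
              (if u = v then ∑ w ∈ B, adjMat G u w else 0) - adjMat G u v
            else 0) := by
  change Qmat B * LR G B = lap G - (1/2 : ℝ) • boundaryLap G B
  ext u v
  rw [Qmat, diagonal_mul]
  by_cases hu : u ∈ B
  · simp only [qw, hu, if_true, LR_apply_of_mem hu, Matrix.sub_apply, Matrix.smul_apply,
      smul_eq_mul]
    ring
  · simp [qw, hu, LR_apply_of_notMem hu, boundaryLap]
end

section
/- Let G=(V,E) be a finite simple graph with boundary set ∂V ⊆ V. Then the matrix Q·L_R is symmetric and positive semidefinite; moreover L_R annihilates the all-ones vector, i.e. L_R·1 = 0, so 0 is an eigenvalue of Q·L_R with eigenvector 1. -/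
/-!
`Q·L_R` is the weighted Laplacian `diag(W·1) - W` of the weight matrix `W = Q·R`, and `W` is
symmetric because the weight `1/2` at boundary vertices cancels the reflection factor `2` of `R`.
The Laplacian of a symmetric nonnegative weight matrix is positive semidefinite, since
`2 xᵀ L x = ∑ᵢⱼ wᵢⱼ (xᵢ - xⱼ)²`, and it kills constants because its rows sum to zero.
-/

open Matrix Finset

namespace Matrix

variable {V R : Type*} [Fintype V] [DecidableEq V]

def weightedLaplacian [Ring R] (W : Matrix V V R) : Matrix V V R :=
  diagonal (W *ᵥ 1) - W

theorem weightedLaplacian_mulVec_one [Ring R] (W : Matrix V V R) :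
    weightedLaplacian W *ᵥ 1 = 0 := by
  ext i
  simp [weightedLaplacian, sub_mulVec, mulVec_diagonal]

theorem diagonal_mul_weightedLaplacian [CommRing R] (d : V → R) (W : Matrix V V R) :
    diagonal d * weightedLaplacian W = weightedLaplacian (diagonal d * W) := by
  rw [weightedLaplacian, weightedLaplacian, mul_sub, diagonal_mul_diagonal, ← mulVec_mulVec]
  congr 2
  ext i
  exact (mulVec_diagonal _ _ _).symm

theorem IsSymm.weightedLaplacian [Ring R] {W : Matrix V V R} (hW : W.IsSymm) :
    (weightedLaplacian W).IsSymm :=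
  (isSymm_diagonal _).sub hW

theorem two_mul_dotProduct_weightedLaplacian_mulVec [CommRing R] {W : Matrix V V R}
    (hW : W.IsSymm) (x : V → R) :
    2 * (x ⬝ᵥ (weightedLaplacian W *ᵥ x)) = ∑ i, ∑ j, W i j * (x i - x j) ^ 2 := by
  have hswap : ∑ i, ∑ j, W i j * x j ^ 2 = ∑ i, ∑ j, W i j * x i ^ 2 := by
    rw [Finset.sum_comm]
    exact Finset.sum_congr rfl fun i _ => Finset.sum_congr rfl fun j _ => by rw [hW.apply j i]
  have hquad : x ⬝ᵥ (weightedLaplacian W *ᵥ x)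
      = ∑ i, ∑ j, W i j * x i ^ 2 - ∑ i, ∑ j, W i j * (x i * x j) := by
    rw [weightedLaplacian, sub_mulVec, dotProduct_sub]
    congr 1
    · simp only [dotProduct, mulVec_diagonal]
      simp only [mulVec, dotProduct, Pi.one_apply, mul_one, Finset.sum_mul, Finset.mul_sum]
      exact Finset.sum_congr rfl fun i _ => Finset.sum_congr rfl fun j _ => by ring
    · simp only [dotProduct, mulVec, Finset.mul_sum]
      exact Finset.sum_congr rfl fun i _ => Finset.sum_congr rfl fun j _ => by ring
  have hexpand : ∑ i, ∑ j, W i j * (x i - x j) ^ 2 = ∑ i, ∑ j, W i j * x i ^ 2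
      + ∑ i, ∑ j, W i j * x j ^ 2 - 2 * ∑ i, ∑ j, W i j * (x i * x j) := by
    simp only [Finset.mul_sum, ← Finset.sum_add_distrib, ← Finset.sum_sub_distrib]
    exact Finset.sum_congr rfl fun i _ => Finset.sum_congr rfl fun j _ => by ring
  rw [hexpand, hswap, hquad]
  ring

theorem posSemidef_weightedLaplacian [CommRing R] [LinearOrder R] [IsStrictOrderedRing R]
    [StarRing R] [TrivialStar R] {W : Matrix V V R} (hW : W.IsSymm) (hW₀ : ∀ i j, 0 ≤ W i j) :
    (weightedLaplacian W).PosSemidef := by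
  refine .of_dotProduct_mulVec_nonneg ?_ fun x => ?_
  · rw [IsHermitian, conjTranspose_eq_transpose_of_trivial]
    exact hW.weightedLaplacian
  · rw [star_trivial]
    refine nonneg_of_mul_nonneg_right ?_ (zero_lt_two' R)
    rw [two_mul_dotProduct_weightedLaplacian_mulVec hW]
    exact Finset.sum_nonneg fun i _ => Finset.sum_nonneg fun j _ =>
      mul_nonneg (hW₀ i j) (sq_nonneg _)

end Matrix

namespace RN

variable {V : Type*} [Fintype V] [DecidableEq V] (G : SimpleGraph V) [DecidableRel G.Adj]
  (B : Finset V)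

theorem LR_eq_weightedLaplacian : LR G B = weightedLaplacian (reflAdj G B) := by
  rw [LR, Dmat, weightedLaplacian]
  congr 2
  ext v
  simp [deg, mulVec, dotProduct]

theorem isSymm_Qmat_mul_reflAdj : (Qmat B * reflAdj G B).IsSymm := by
  ext u v
  by_cases hu : u ∈ B <;> by_cases hv : v ∈ B <;>
    simp [Qmat, qw, reflAdj, adjMat, G.adj_comm, hu, hv]

theorem Qmat_mul_reflAdj_nonneg (u v : V) : 0 ≤ (Qmat B * reflAdj G B) u v := by
  simp only [Qmat, reflAdj, adjMat, qw, diagonal_mul, of_apply]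
  split_ifs <;> norm_num

theorem Qmat_mul_LR : Qmat B * LR G B = weightedLaplacian (Qmat B * reflAdj G B) := by
  rw [LR_eq_weightedLaplacian, Qmat, diagonal_mul_weightedLaplacian]

end RN

open RN

/-- The matrix `Q·L_R` is symmetric and positive semidefinite; moreover `L_R` annihilates the
all-ones vector, so `0` is an eigenvalue of `Q·L_R` with eigenvector `1`. -/
theorem Qmat_mul_LR_isSymm_posSemidef_and_LR_mulVec_one {V : Type*} [Fintype V] [DecidableEq V]
    [Nonempty V] (G : SimpleGraph V) [DecidableRel G.Adj] (B : Finset V) :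
    (Qmat B * LR G B).IsSymm ∧ (Qmat B * LR G B).PosSemidef ∧
    LR G B *ᵥ (fun _ => (1 : ℝ)) = 0 ∧
    Module.End.HasEigenvector (Matrix.toLin' (Qmat B * LR G B)) 0 (fun _ => (1 : ℝ)) := by
  have hsymm := isSymm_Qmat_mul_reflAdj G B
  refine ⟨Qmat_mul_LR G B ▸ hsymm.weightedLaplacian,
    Qmat_mul_LR G B ▸ posSemidef_weightedLaplacian hsymm (Qmat_mul_reflAdj_nonneg G B),
    LR_eq_weightedLaplacian G B ▸ weightedLaplacian_mulVec_one _, ?_, one_ne_zero⟩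
  rw [Module.End.mem_eigenspace_iff, toLin'_apply, zero_smul, Qmat_mul_LR]
  exact weightedLaplacian_mulVec_one _
end

section
/- Let G=(V,E) be a finite simple graph with boundary set ∂V ⊆ V such that every diagonal entry of D is strictly positive, and let S := diag(1,√2) be the block diagonal matrix equal to the identity on the interior block and √2 times the identity on the boundary block. Writing L_R in block form as [[X, Y],[2Yᵀ, Z]] (where X = D(V̊,V̊) − A₁₁, Y = −A₁₂, Z = D(∂V,∂V) − A₂₂), one has L_R = S · [[X, √2·Y],[√2·Yᵀ, Z]] · S^{-1}; in particular L_R is similar to a real symmetric matrix and therefore is diagonalizable over ℝ with all eigenvalues real. -/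
open Matrix Finset

open RN

/-! With weights `w = 1` on the interior and `w = 2` on the boundary, the factor `2` that the
reflection puts on the boundary-to-interior entries of `R` is exactly balanced by `w`, so
`L_R · diag(w)` is symmetric. Since `w = s²` for `s = diag(1, √2)`, the rescaled matrix
`S⁻¹ L_R S = S⁻¹ (L_R · diag(w)) S⁻¹` is symmetric as well, and the real spectral theorem
diagonalizes it; conjugating back by `S` diagonalizes `L_R`. -/

namespace Matrix

variable {n : Type*} [Fintype n] [DecidableEq n]

def IsDiagonalizable {R : Type*} [CommRing R] (A : Matrix n n R) : Prop :=
  ∃ (P : Matrix n n R) (d : n → R), IsUnit P ∧ A = P * diagonal d * P⁻¹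

theorem IsDiagonalizable.of_conj {R : Type*} [CommRing R] {A M S : Matrix n n R}
    (hM : M.IsDiagonalizable) (hS : IsUnit S) (hA : A = S * M * S⁻¹) : A.IsDiagonalizable := by
  obtain ⟨P, d, hP, rfl⟩ := hM
  refine ⟨S * P, d, hS.mul hP, ?_⟩
  rw [hA, mul_inv_rev]
  simp only [Matrix.mul_assoc]

theorem IsHermitian.isDiagonalizable {𝕜 : Type*} [RCLike 𝕜] {A : Matrix n n 𝕜}
    (hA : A.IsHermitian) : A.IsDiagonalizable :=
  ⟨hA.eigenvectorUnitary, RCLike.ofReal ∘ hA.eigenvalues, Unitary.isUnit_coe, by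
    rw [inv_eq_left_inv (Unitary.coe_star_mul_self _)]
    exact hA.spectral_theorem⟩

theorem IsSymm.isDiagonalizable {A : Matrix n n ℝ} (hA : A.IsSymm) : A.IsDiagonalizable :=
  (isHermitian_iff_isSymm.mpr hA).isDiagonalizable

variable {K : Type*} [Field K]

theorem inv_diagonal_of_ne_zero {s : n → K} (hs : ∀ i, s i ≠ 0) :
    (diagonal s)⁻¹ = diagonal s⁻¹ :=
  inv_eq_left_inv <| by
    rw [diagonal_mul_diagonal, ← diagonal_one]
    exact congrArg diagonal (funext fun i => inv_mul_cancel₀ (hs i))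

theorem eq_diagonal_mul_mul_inv_diagonal (A : Matrix n n K) {s : n → K} (hs : ∀ i, s i ≠ 0) :
    A = diagonal s * (of fun i j => (s i)⁻¹ * A i j * s j) * (diagonal s)⁻¹ := by
  ext i j
  rw [inv_diagonal_of_ne_zero hs, mul_diagonal, diagonal_mul, of_apply, Pi.inv_apply]
  field_simp [hs i, hs j]

theorem isSymm_inv_mul_mul_of_isSymm_mul_diagonal_sq {A : Matrix n n K} {s : n → K}
    (hA : (A * diagonal fun i => s i ^ 2).IsSymm) :
    (of fun i j => (s i)⁻¹ * A i j * s j).IsSymm := by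
  have h : (of fun i j => (s i)⁻¹ * A i j * s j) =
      diagonal s⁻¹ * (A * diagonal fun i => s i ^ 2) * diagonal s⁻¹ := by
    ext i j
    simp only [of_apply, mul_diagonal, diagonal_mul, Pi.inv_apply]
    conv_rhs => rw [mul_assoc, mul_assoc, sq, mul_self_mul_inv, ← mul_assoc]
  rw [h, IsSymm, transpose_mul, transpose_mul, diagonal_transpose, hA.eq, ← Matrix.mul_assoc]

end Matrix

namespace RN

variable {V : Type*} [Fintype V] [DecidableEq V] (G : SimpleGraph V) [DecidableRel G.Adj]
  (B : Finset V)

theorem reflAdj_mul_diagonal_isSymm :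
    (reflAdj G B * diagonal fun v => if v ∈ B then (2 : ℝ) else 1).IsSymm := by
  refine IsSymm.ext fun u v => ?_
  simp only [mul_diagonal, reflAdj, adjMat, of_apply, G.adj_comm]
  by_cases hu : u ∈ B <;> by_cases hv : v ∈ B <;> simp [hu, hv, mul_comm]

theorem LR_mul_diagonal_sq_isSymm :
    (LR G B * diagonal fun v => (if v ∈ B then √2 else 1) ^ 2).IsSymm := by
  have hw : (fun v => (if v ∈ B then √2 else 1) ^ 2) = fun v => if v ∈ B then (2 : ℝ) else 1 := by
    funext v
    split_ifs <;> simp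
  rw [hw, LR, Dmat, Matrix.sub_mul, diagonal_mul_diagonal]
  exact (isSymm_diagonal _).sub (reflAdj_mul_diagonal_isSymm G B)

end RN

theorem LR_similar_symmetric_and_diagonalizable_general {V : Type*} [Fintype V] [DecidableEq V]
    (G : SimpleGraph V) [DecidableRel G.Adj] (B : Finset V) :
    (LR G B =
        Matrix.diagonal (fun v => if v ∈ B then Real.sqrt 2 else 1)
          * (Matrix.of fun u v =>
              (if u ∈ B then Real.sqrt 2 else 1)⁻¹ * LR G B u v
                * (if v ∈ B then Real.sqrt 2 else 1))
          * (Matrix.diagonal (fun v => if v ∈ B then Real.sqrt 2 else 1))⁻¹) ∧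
    (Matrix.of fun u v =>
        (if u ∈ B then Real.sqrt 2 else 1)⁻¹ * LR G B u v
          * (if v ∈ B then Real.sqrt 2 else 1)).IsSymm ∧
    ∃ (P : Matrix V V ℝ) (d : V → ℝ), IsUnit P ∧ LR G B = P * Matrix.diagonal d * P⁻¹ := by
  have hs : ∀ v, (if v ∈ B then √2 else 1) ≠ 0 := fun v => by split_ifs <;> positivity
  have hconj := eq_diagonal_mul_mul_inv_diagonal (LR G B) hs
  have hsymm := isSymm_inv_mul_mul_of_isSymm_mul_diagonal_sq (LR_mul_diagonal_sq_isSymm G B)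
  have hS : IsUnit (diagonal fun v => if v ∈ B then √2 else 1) :=
    isUnit_diagonal.mpr (Pi.isUnit_iff.mpr fun v => (hs v).isUnit)
  exact ⟨hconj, hsymm, hsymm.isDiagonalizable.of_conj hS hconj⟩

/-- `L_R` is the conjugate, by the block diagonal matrix `S = diag(1, √2)` (identity on the
interior block, `√2` on the boundary block), of the symmetric matrix `[[X, √2·Y],[√2·Yᵀ, Z]]`
whose `(u,v)` entry is `(S⁻¹ L_R S)(u,v) = s_u⁻¹ (L_R)_{uv} s_v`; in particular `L_R` is
similar to a real symmetric matrix and hence diagonalizable over `ℝ` with real eigenvalues. -/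
theorem LR_similar_symmetric_and_diagonalizable {V : Type*} [Fintype V] [DecidableEq V]
    (G : SimpleGraph V) [DecidableRel G.Adj] (B : Finset V)
    (hD : ∀ v, 0 < deg G B v) :
    (LR G B =
        Matrix.diagonal (fun v => if v ∈ B then Real.sqrt 2 else 1)
          * (Matrix.of fun u v =>
              (if u ∈ B then Real.sqrt 2 else 1)⁻¹ * LR G B u v
                * (if v ∈ B then Real.sqrt 2 else 1))
          * (Matrix.diagonal (fun v => if v ∈ B then Real.sqrt 2 else 1))⁻¹) ∧
    (Matrix.of fun u v =>
        (if u ∈ B then Real.sqrt 2 else 1)⁻¹ * LR G B u v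
          * (if v ∈ B then Real.sqrt 2 else 1)).IsSymm ∧
    ∃ (P : Matrix V V ℝ) (d : V → ℝ), IsUnit P ∧ LR G B = P * Matrix.diagonal d * P⁻¹ :=
  LR_similar_symmetric_and_diagonalizable_general G B
end

section
/- Let X be a real symmetric n×n matrix, Z a real symmetric m×m matrix, and Y a real n×m matrix, and let L' be the (n+m+n)×(n+m+n) block matrix [[X, Y, 0],[Yᵀ, Z, Yᵀ],[0, Y, X]]. Then ℝ^{n+m+n} admits a basis consisting of eigenvectors of L', of which exactly n+m are even (of the form (u, v, u)) and exactly n are odd (of the form (u, 0, −u)). -/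
/-!
`L'` commutes with the swap of the two interior copies, so it preserves the even vectors
`(u, v, u)` and the odd vectors `(x, 0, -x)`, and `ℝ^{n+m+n}` is their direct sum. On odd vectors
`L'` acts as `X`; on even vectors it acts on `(u, v)` as `[[X, Y], [2Yᵀ, Z]]`, which rescaling `u`
by `√2` turns into the symmetric matrix `[[X, √2 Y], [√2 Yᵀ, Z]]`. The spectral theorem for `X` and
for this matrix gives the two halves of the eigenbasis.
-/

open Matrix

namespace RN

/-- The block matrix `L' = [[X, Y, 0], [Yᵀ, Z, Yᵀ], [0, Y, X]]` of the Laplacian of the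
doubled graph, on the index type `Fin n ⊕ (Fin m ⊕ Fin n)`. -/
def doubledLap (n m : ℕ) (X : Matrix (Fin n) (Fin n) ℝ) (Y : Matrix (Fin n) (Fin m) ℝ)
    (Z : Matrix (Fin m) (Fin m) ℝ) :
    Matrix (Fin n ⊕ (Fin m ⊕ Fin n)) (Fin n ⊕ (Fin m ⊕ Fin n)) ℝ :=
  Matrix.of fun p q =>
    match p, q with
    | .inl i, .inl j => X i j
    | .inl i, .inr (.inl j) => Y i j
    | .inl _, .inr (.inr _) => 0
    | .inr (.inl i), .inl j => Y j i
    | .inr (.inl i), .inr (.inl j) => Z i j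
    | .inr (.inl i), .inr (.inr j) => Y j i
    | .inr (.inr _), .inl _ => 0
    | .inr (.inr i), .inr (.inl j) => Y i j
    | .inr (.inr i), .inr (.inr j) => X i j

/-- The even vector `(u, v, u)`. -/
def evec {n m : ℕ} (u : Fin n → ℝ) (v : Fin m → ℝ) : Fin n ⊕ (Fin m ⊕ Fin n) → ℝ :=
  Sum.elim u (Sum.elim v u)

/-- The odd vector `(u, 0, -u)`. -/
def ovec {n m : ℕ} (u : Fin n → ℝ) : Fin n ⊕ (Fin m ⊕ Fin n) → ℝ :=
  Sum.elim u (Sum.elim 0 (-u))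

end RN

open RN

namespace Matrix

variable {𝕜 ι : Type*} [RCLike 𝕜] [Fintype ι] [DecidableEq ι]

theorem IsHermitian.exists_basis_mulVec_eq_smul {S : Matrix ι ι 𝕜} (hS : S.IsHermitian) :
    ∃ (b : Module.Basis ι 𝕜 (ι → 𝕜)) (μ : ι → ℝ), ∀ i, S *ᵥ b i = μ i • b i :=
  ⟨hS.eigenvectorBasis.toBasis.map (WithLp.linearEquiv 2 𝕜 (ι → 𝕜)), hS.eigenvalues,
    fun i => by simpa using hS.mulVec_eigenvectorBasis i⟩

theorem exists_basis_mulVec_eq_smul_of_mul_eq_mul {A S P : Matrix ι ι 𝕜} (hS : S.IsHermitian)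
    (hP : IsUnit P) (hAP : A * P = P * S) :
    ∃ (b : Module.Basis ι 𝕜 (ι → 𝕜)) (μ : ι → ℝ), ∀ i, A *ᵥ b i = μ i • b i := by
  obtain ⟨b, μ, hb⟩ := hS.exists_basis_mulVec_eq_smul
  refine ⟨b.map (P.toLinearEquiv' hP.invertible), μ, fun i => ?_⟩
  show A *ᵥ (P *ᵥ b i) = μ i • (P *ᵥ b i)
  rw [mulVec_mulVec, hAP, ← mulVec_mulVec, hb, mulVec_smul]

end Matrix

namespace RN

variable {n m : ℕ}

noncomputable def evenOddEquiv (n m : ℕ) :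
    ((Fin n ⊕ Fin m → ℝ) × (Fin n → ℝ)) ≃ₗ[ℝ] (Fin n ⊕ (Fin m ⊕ Fin n) → ℝ) where
  toFun p := evec (p.1 ∘ Sum.inl) (p.1 ∘ Sum.inr) + ovec p.2
  map_add' p q := by
    funext x; rcases x with i | j | i <;> simp [evec, ovec] <;> ring
  map_smul' c p := by
    funext x; rcases x with i | j | i <;> simp [evec, ovec] <;> ring
  invFun f := (Sum.elim (fun i => (f (.inl i) + f (.inr (.inr i))) / 2) (fun j => f (.inr (.inl j))),
    fun i => (f (.inl i) - f (.inr (.inr i))) / 2)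
  left_inv p := by
    ext x
    · rcases x with i | j <;> simp [evec, ovec]
      ring
    · simp [evec, ovec]
  right_inv f := by
    funext x; rcases x with i | j | i <;> simp [evec, ovec] <;> ring

theorem evenOddEquiv_apply (p : (Fin n ⊕ Fin m → ℝ) × (Fin n → ℝ)) :
    evenOddEquiv n m p = evec (p.1 ∘ Sum.inl) (p.1 ∘ Sum.inr) + ovec p.2 :=
  rfl

theorem evenOddEquiv_apply_zero_right (w : Fin n ⊕ Fin m → ℝ) :
    evenOddEquiv n m (w, 0) = evec (w ∘ Sum.inl) (w ∘ Sum.inr) := by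
  simp [evenOddEquiv, ovec]

theorem evenOddEquiv_apply_zero_left (u : Fin n → ℝ) :
    evenOddEquiv n m (0, u) = ovec u := by
  simp [evenOddEquiv, evec]

def evenBlock (X : Matrix (Fin n) (Fin n) ℝ) (Y : Matrix (Fin n) (Fin m) ℝ)
    (Z : Matrix (Fin m) (Fin m) ℝ) : Matrix (Fin n ⊕ Fin m) (Fin n ⊕ Fin m) ℝ :=
  fromBlocks X Y (2 • Yᵀ) Z

variable (X : Matrix (Fin n) (Fin n) ℝ) (Y : Matrix (Fin n) (Fin m) ℝ) (Z : Matrix (Fin m) (Fin m) ℝ)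

theorem doubledLap_mulVec_evec (u : Fin n → ℝ) (v : Fin m → ℝ) :
    doubledLap n m X Y Z *ᵥ evec u v = evec (X *ᵥ u + Y *ᵥ v) (2 • (Yᵀ *ᵥ u) + Z *ᵥ v) := by
  funext p
  rcases p with i | j | i <;>
    simp [doubledLap, evec, mulVec, dotProduct, Fintype.sum_sum_type, two_mul] <;> ring

theorem doubledLap_mulVec_ovec (u : Fin n → ℝ) :
    doubledLap n m X Y Z *ᵥ ovec u = ovec (X *ᵥ u) := by
  funext p
  rcases p with i | j | i <;> simp [doubledLap, ovec, mulVec, dotProduct, Fintype.sum_sum_type]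

theorem doubledLap_mulVec_evenOddEquiv (p : (Fin n ⊕ Fin m → ℝ) × (Fin n → ℝ)) :
    doubledLap n m X Y Z *ᵥ evenOddEquiv n m p
      = evenOddEquiv n m (evenBlock X Y Z *ᵥ p.1, X *ᵥ p.2) := by
  obtain ⟨w, x⟩ := p
  rw [← Sum.elim_comp_inl_inr w]
  simp only [evenOddEquiv_apply, mulVec_add, doubledLap_mulVec_evec, doubledLap_mulVec_ovec,
    evenBlock, fromBlocks_mulVec, Sum.elim_comp_inl, Sum.elim_comp_inr, smul_mulVec]

noncomputable def symmetrizedEvenBlock : Matrix (Fin n ⊕ Fin m) (Fin n ⊕ Fin m) ℝ :=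
  fromBlocks X (√2 • Y) (√2 • Yᵀ) Z

variable {X Z} in
theorem isHermitian_symmetrizedEvenBlock (hX : X.IsSymm) (hZ : Z.IsSymm) :
    (symmetrizedEvenBlock X Y Z).IsHermitian :=
  .fromBlocks (isHermitian_iff_isSymm.2 hX) (by simp)
    (isHermitian_iff_isSymm.2 hZ)

theorem evenBlock_mul_diagonal :
    evenBlock X Y Z * diagonal (Sum.elim (fun _ => (√2)⁻¹) 1)
      = diagonal (Sum.elim (fun _ => (√2)⁻¹) 1) * symmetrizedEvenBlock X Y Z := by
  ext (i | j) (i' | j') <;> simp [evenBlock, symmetrizedEvenBlock, mul_diagonal, diagonal_mul]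
  · field_simp
  · field_simp
    rw [Real.sq_sqrt zero_le_two, mul_comm]

end RN

/-- **Even/odd eigenbasis of the doubled-graph Laplacian.** For `L' = [[X,Y,0],[Yᵀ,Z,Yᵀ],[0,Y,X]]`
with `X`, `Z` real symmetric, `ℝ^{n+m+n}` has a basis of eigenvectors of `L'`, of which exactly
`n + m` are even (of the form `(u,v,u)`) and exactly `n` are odd (of the form `(u,0,−u)`). -/
theorem doubledLap_eigenbasis_even_odd (n m : ℕ) (X : Matrix (Fin n) (Fin n) ℝ) (hX : X.IsSymm)
    (Z : Matrix (Fin m) (Fin m) ℝ) (hZ : Z.IsSymm) (Y : Matrix (Fin n) (Fin m) ℝ) :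
    ∃ (ev : Fin (n + m) → (Fin n ⊕ (Fin m ⊕ Fin n) → ℝ))
      (od : Fin n → (Fin n ⊕ (Fin m ⊕ Fin n) → ℝ))
      (μ : Fin (n + m) → ℝ) (lam : Fin n → ℝ),
      (∀ i, ∃ u v, ev i = evec u v) ∧
      (∀ i, doubledLap n m X Y Z *ᵥ ev i = μ i • ev i) ∧
      (∀ i, ∃ u, od i = ovec u) ∧
      (∀ i, doubledLap n m X Y Z *ᵥ od i = lam i • od i) ∧
      LinearIndependent ℝ (Sum.elim ev od) ∧
      Submodule.span ℝ (Set.range (Sum.elim ev od)) = ⊤ := by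
  obtain ⟨be, μ, hbe⟩ := exists_basis_mulVec_eq_smul_of_mul_eq_mul
    (isHermitian_symmetrizedEvenBlock Y hX hZ) (by simp [isUnit_diagonal, Pi.isUnit_iff])
    (evenBlock_mul_diagonal X Y Z)
  obtain ⟨bo, lam, hbo⟩ := (isHermitian_iff_isSymm.2 hX).exists_basis_mulVec_eq_smul
  let B := ((be.reindex finSumFinEquiv).prod bo).map (evenOddEquiv n m)
  have hB : Sum.elim (B ∘ Sum.inl) (B ∘ Sum.inr) = B := Sum.elim_comp_inl_inr B
  refine ⟨B ∘ Sum.inl, B ∘ Sum.inr, μ ∘ finSumFinEquiv.symm, lam, fun k => ?_, fun k => ?_,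
    fun j => ?_, fun j => ?_, hB ▸ B.linearIndependent, hB ▸ B.span_eq⟩
  · simp [B, evenOddEquiv_apply_zero_right]
  · simp [B, doubledLap_mulVec_evenOddEquiv, hbe, ← map_smul]
  · simp [B, evenOddEquiv_apply_zero_left]
  · simp [B, doubledLap_mulVec_evenOddEquiv, hbo, ← map_smul]
end
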